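/- Folding preserves confluence of central-firing: let Φ be a simply laced root system with Dynkin diagram automorphism σ (no vertex adjacent to its image), and let Φ' be the folded root system with simple roots α_J = ∑_{i∈J} αᵢ over σ-orbits J. If central-firing for Φ is confluent from a σ-invariant weight λ ∈ P^σ, then central-firing for Φ' is confluent from λ. -/

import Mathlib

/-!
A folded firing move from a `σ`-invariant weight fires the pairwise orthogonal roots of one
`σ`-orbit one after the other, so every folded firing sequence from `λ` is an ordinary one
through `σ`-invariant weights. Conversely, if a `σ`-invariant weight `μ` can still fire, take
among the positive roots orthogonal to `μ` one, `δ`, of maximal height for a `σ`-invariant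
height function. Two distinct roots of the orbit of `δ` have equal length and height, so their
inner product can be neither positive (their difference would be a root of height `0`) nor
negative (their sum would be a higher positive root orthogonal to `μ`). The orbit sum of `δ` is
then a folded positive root orthogonal to `μ`. Hence terminal weights of folded firing from `λ`
are terminal for ordinary firing, and confluence transfers.
-/

open scoped RealInnerProductSpace

noncomputable section

namespace CF

variable {V : Type*} [NormedAddCommGroup V] [InnerProductSpace ℝ V]

/-- The coroot `α∨ = 2α/⟨α,α⟩`. -/
def coroot (α : V) : V := (2 / ⟪α, α⟫) • α

/-- A reduced crystallographic root system in `V`. -/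
def IsRootSystem (Φ : Set V) : Prop :=
  Φ.Finite ∧ (0 : V) ∉ Φ ∧ Submodule.span ℝ Φ = ⊤ ∧
    (∀ α ∈ Φ, ∀ β ∈ Φ, β - ⟪β, coroot α⟫ • α ∈ Φ) ∧
    (∀ α ∈ Φ, ∀ t : ℝ, t • α ∈ Φ → t = 1 ∨ t = -1) ∧
    (∀ α ∈ Φ, ∀ β ∈ Φ, ∃ n : ℤ, ⟪β, coroot α⟫ = (n : ℝ))

/-- A choice of positive roots `Φ⁺ ⊆ Φ` (exactly one of `±α` is positive, and the positive
roots lie strictly on one side of a hyperplane). -/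
def IsPositiveSystem (Φ Φp : Set V) : Prop :=
  Φp ⊆ Φ ∧ (∀ α ∈ Φ, (α ∈ Φp ∨ -α ∈ Φp) ∧ ¬(α ∈ Φp ∧ -α ∈ Φp)) ∧
    ∃ ℓ : V →ₗ[ℝ] ℝ, ∀ α ∈ Φp, 0 < ℓ α

/-- The weight lattice `P = {v : ⟨v, α∨⟩ ∈ ℤ for all α ∈ Φ}`. -/
def weightLattice (Φ : Set V) : Set V :=
  {v | ∀ α ∈ Φ, ∃ n : ℤ, ⟪v, coroot α⟫ = (n : ℝ)}

/-- Central-firing: `λ → λ + α` whenever `α ∈ Φ⁺` and `⟨λ, α∨⟩ = 0`. -/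
def fire (Φp : Set V) (lam mu : V) : Prop :=
  ∃ α ∈ Φp, ⟪lam, coroot α⟫ = 0 ∧ mu = lam + α

/-- The Weyl group: the group of linear isometries generated by the reflections `s_α`, `α ∈ Φ`. -/
def weylGroup (Φ : Set V) : Subgroup (V ≃ₗᵢ[ℝ] V) :=
  Subgroup.closure {g | ∃ α ∈ Φ, ∀ v, g v = v - ⟪v, coroot α⟫ • α}

/-- `v` and `w` lie in the same Weyl group orbit. -/
def sameOrbit (Φ : Set V) (v w : V) : Prop := ∃ g ∈ weylGroup Φ, g v = w

def weylOrbit (Φ : Set V) (v : V) : Set V := {w | sameOrbit Φ v w}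

/-- The root lattice `Q`. -/
def rootLattice (Φ : Set V) : AddSubgroup V := AddSubgroup.closure Φ

/-- `Π^Q(λ)`: the points of the permutohedron `Π(λ) = ConvexHull(Wλ)` lying in `λ + Q`. -/
def permQ (Φ : Set V) (lam : V) : Set V :=
  {mu | mu ∈ convexHull ℝ (weylOrbit Φ lam) ∧ lam - mu ∈ rootLattice Φ}

def IsDominant (Δ : Set V) (lam : V) : Prop := ∀ a ∈ Δ, 0 ≤ ⟪lam, coroot a⟫

def IsStrictlyDominant (Δ : Set V) (lam : V) : Prop := ∀ a ∈ Δ, 0 < ⟪lam, coroot a⟫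

/-- A minuscule weight: a nonzero dominant weight whose `Π^Q` consists of its Weyl orbit. -/
def IsMinuscule (Φ Δ : Set V) (w : V) : Prop :=
  w ≠ 0 ∧ IsDominant Δ w ∧ ∀ mu ∈ permQ Φ w, sameOrbit Φ w mu

/-- `Δ` is a system of simple roots for the positive system `Φ⁺`. -/
def IsSimpleSystem (Φp : Set V) (Δ : Finset V) : Prop :=
  (Δ : Set V) ⊆ Φp ∧ LinearIndependent ℝ (fun a : (Δ : Set V) => (a : V)) ∧
    ∀ α ∈ Φp, ∃ c : V → ℝ, (∀ a ∈ Δ, 0 ≤ c a) ∧ α = ∑ a ∈ Δ, c a • a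

def IsSimplyLaced (Φ : Set V) : Prop := ∀ α ∈ Φ, ∀ β ∈ Φ, ⟪α, α⟫ = ⟪β, β⟫

/-- Irreducibility: `Φ` cannot be split into two nonempty mutually orthogonal parts. -/
def IsIrreducibleRS (Φ : Set V) : Prop :=
  ¬ ∃ S T : Set V, S.Nonempty ∧ T.Nonempty ∧ S ∪ T = Φ ∧ ∀ a ∈ S, ∀ b ∈ T, ⟪a, b⟫ = 0

/-- The firing span `FS_S(λ) = Span_ℝ{μ − λ : λ →* μ}`. -/
def firingSpan (Φp : Set V) (lam : V) : Submodule ℝ V :=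
  Submodule.span ℝ {d | ∃ mu, Relation.ReflTransGen (fire Φp) lam mu ∧ d = mu - lam}

/-- Central-firing on Weyl orbits: `Wλ → Wμ` iff some representatives fire. -/
def ofire (Φ Φp : Set V) (lam mu : V) : Prop :=
  ∃ lam' mu', sameOrbit Φ lam lam' ∧ sameOrbit Φ mu mu' ∧ fire Φp lam' mu'

/-- Connectivity of roots within a subset `Ψ` (via non-orthogonality). -/
def sameComponent (Ψ : Set V) (β γ : V) : Prop :=
  Relation.ReflTransGen (fun x y => x ∈ Ψ ∧ y ∈ Ψ ∧ ⟪x, y⟫ ≠ 0) β γ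

/-- Confluence of central-firing from `λ`: all maximal firing sequences from `λ`
terminate at the same weight. -/
def ConfluentFrom (S : Set V) (lam : V) : Prop :=
  ∀ mu₁ mu₂ : V, Relation.ReflTransGen (fire S) lam mu₁ → (¬ ∃ ν, fire S mu₁ ν) →
    Relation.ReflTransGen (fire S) lam mu₂ → (¬ ∃ ν, fire S mu₂ ν) → mu₁ = mu₂

/-- `β` is a positive root of the folded root system: the sum of a `σ`-orbit `B` of
pairwise orthogonal positive roots of `Φ`. -/
def IsFoldedPosRoot (σ : V ≃ₗᵢ[ℝ] V) (Φp : Set V) (β : V) : Prop :=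
  ∃ B : Finset V, (B : Set V) ⊆ Φp ∧ B.Nonempty ∧
    (∀ γ ∈ B, σ γ ∈ B) ∧
    (∀ γ ∈ B, ∀ δ ∈ B, ∃ k : ℕ, (fun v => σ v)^[k] γ = δ) ∧
    (∀ γ ∈ B, ∀ δ ∈ B, γ ≠ δ → ⟪γ, δ⟫ = 0) ∧
    β = ∑ γ ∈ B, γ

open Function Set Relation

section Dynamics

variable {α β : Type*} {f : α → α}

theorem exists_pos_iterate_eq_self_of_mapsTo (hf : Injective f) {s : Finset α}
    (hs : MapsTo f s s) : ∃ r, 0 < r ∧ ∀ x ∈ s, f^[r] x = x := by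
  have hid := injective_iff_iterate_factorial_card_eq_id.mp (hs.restrict_inj.mpr hf.injOn)
  rw [hs.iterate_restrict] at hid
  exact ⟨_, Nat.factorial_pos _, fun x hx => congrArg Subtype.val (congrFun hid ⟨x, hx⟩)⟩

theorem apply_iterate_eq_of_mapsTo {g : α → β} {s : Set α} (hs : MapsTo f s s)
    (hg : ∀ x ∈ s, g (f x) = g x) (n : ℕ) {x : α} (hx : x ∈ s) : g (f^[n] x) = g x := by
  induction n generalizing x with
  | zero => rfl
  | succ n ih => rw [iterate_succ_apply, ih (hs hx), hg x hx]

def orbitFinset [DecidableEq α] (f : α → α) (x : α) : Finset α :=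
  (Finset.range (minimalPeriod f x)).image fun n => f^[n] x

variable [DecidableEq α] {x y z : α}

theorem mem_orbitFinset (hx : x ∈ periodicPts f) : y ∈ orbitFinset f x ↔ ∃ n, f^[n] x = y := by
  simp only [orbitFinset, Finset.mem_image, Finset.mem_range]
  refine ⟨fun ⟨n, _, hn⟩ => ⟨n, hn⟩, fun ⟨n, hn⟩ => ?_⟩
  exact ⟨n % minimalPeriod f x, Nat.mod_lt _ (minimalPeriod_pos_of_mem_periodicPts hx),
    by rw [iterate_mod_minimalPeriod_eq, hn]⟩

theorem exists_iterate_eq_of_mem_orbitFinset (hx : x ∈ periodicPts f)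
    (hy : y ∈ orbitFinset f x) (hz : z ∈ orbitFinset f x) : ∃ k, f^[k] y = z := by
  obtain ⟨i, rfl⟩ := (mem_orbitFinset hx).mp hy
  obtain ⟨j, rfl⟩ := (mem_orbitFinset hx).mp hz
  obtain ⟨m, hm⟩ : ∃ m, minimalPeriod f x = m + 1 :=
    Nat.exists_eq_add_one.mpr (minimalPeriod_pos_of_mem_periodicPts hx)
  refine ⟨j + m * i, ?_⟩
  have hper : IsPeriodicPt f ((m + 1) * i) x := hm ▸ (isPeriodicPt_minimalPeriod f x).mul_const i
  rw [← iterate_add_apply, show j + m * i + i = j + (m + 1) * i by ring, iterate_add_apply,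
    hper.eq]

end Dynamics

theorem exists_pos_linearMap_invariant {S : Set V} (ℓ : V →ₗ[ℝ] ℝ) (hℓ : ∀ α ∈ S, 0 < ℓ α)
    (f : V →ₗ[ℝ] V) (hS : MapsTo f S S) {r : ℕ} (hr : 0 < r) (hper : ∀ α ∈ S, f^[r] α = α) :
    ∃ h : V →ₗ[ℝ] ℝ, (∀ α ∈ S, 0 < h α) ∧ ∀ α ∈ S, h (f α) = h α := by
  refine ⟨∑ j ∈ Finset.range r, ℓ ∘ₗ f ^ j, fun α hα => ?_, fun α hα => ?_⟩
  · simp only [LinearMap.sum_apply, LinearMap.comp_apply, Module.End.pow_apply]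
    exact Finset.sum_pos (fun j _ => hℓ _ (hS.iterate j hα)) (Finset.nonempty_range_iff.mpr hr.ne')
  · simp only [LinearMap.sum_apply, LinearMap.comp_apply, Module.End.pow_apply,
      ← iterate_succ_apply]
    have h₁ := Finset.sum_range_succ' (fun j => ℓ (f^[j] α)) r
    have h₂ := Finset.sum_range_succ (fun j => ℓ (f^[j] α)) r
    simp only [hper α hα, iterate_zero_apply] at h₁ h₂
    linarith

theorem inner_coroot_eq_zero_iff (α v : V) : ⟪v, coroot α⟫ = 0 ↔ ⟪v, α⟫ = 0 := by
  rcases eq_or_ne α 0 with rfl | hα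
  · simp [coroot]
  · simp [coroot, real_inner_smul_right, hα]

theorem inner_coroot_self {α : V} (hα : α ≠ 0) : ⟪α, coroot α⟫ = 2 := by
  simp [coroot, real_inner_smul_right, hα]

namespace IsRootSystem

variable {Φ : Set V} {δ ε : V}

theorem neg_mem (hΦ : IsRootSystem Φ) (hδ : δ ∈ Φ) : -δ ∈ Φ := by
  have hδ0 : δ ≠ 0 := fun h => hΦ.2.1 (h ▸ hδ)
  simpa [inner_coroot_self hδ0, two_smul] using hΦ.2.2.2.1 δ hδ δ hδ

theorem sub_mem_of_inner_pos (hΦ : IsRootSystem Φ) (hδ : δ ∈ Φ) (hε : ε ∈ Φ)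
    (hlen : ⟪ε, ε⟫ = ⟪δ, δ⟫) (hpos : 0 < ⟪δ, ε⟫) (hne : ε ≠ δ) : ε - δ ∈ Φ := by
  obtain ⟨n, hn⟩ := hΦ.2.2.2.2.2 δ hδ ε hε
  have hδδ : 0 < ⟪δ, δ⟫ := real_inner_self_pos.mpr (by rintro rfl; simp at hpos)
  have hcoroot : ⟪ε, coroot δ⟫ = 2 * ⟪δ, ε⟫ / ⟪δ, δ⟫ := by
    rw [coroot, real_inner_smul_right, real_inner_comm δ ε]; ring
  -- `‖δ - ε‖² > 0` forces `⟪δ, ε⟫ < ‖δ‖²`, so the integer `⟪ε, δ∨⟫` lies strictly between 0 and 2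
  have hlt : ⟪δ, ε⟫ < ⟪δ, δ⟫ := by
    have := real_inner_self_pos.mpr (sub_ne_zero.mpr hne.symm)
    rw [real_inner_sub_sub_self, hlen] at this
    linarith
  have hn1 : n = 1 := by
    have h0 : (0 : ℝ) < n := by rw [← hn, hcoroot]; positivity
    have h2 : (n : ℝ) < 2 := by rw [← hn, hcoroot, div_lt_iff₀ hδδ]; linarith
    have : (0 : ℤ) < n ∧ n < 2 := ⟨by exact_mod_cast h0, by exact_mod_cast h2⟩
    omega
  simpa [hn, hn1] using hΦ.2.2.2.1 δ hδ ε hε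

theorem add_mem_of_inner_neg (hΦ : IsRootSystem Φ) (hδ : δ ∈ Φ) (hε : ε ∈ Φ)
    (hlen : ⟪ε, ε⟫ = ⟪δ, δ⟫) (hneg : ⟪δ, ε⟫ < 0) (hne : ε ≠ -δ) : ε + δ ∈ Φ := by
  simpa using hΦ.sub_mem_of_inner_pos (hΦ.neg_mem hδ) hε (by simpa using hlen)
    (by simpa [inner_neg_left] using hneg) hne

end IsRootSystem

theorem IsPositiveSystem.mem_of_nonneg {Φ Φp : Set V} (hp : IsPositiveSystem Φ Φp)
    {h : V →ₗ[ℝ] ℝ} (hpos : ∀ α ∈ Φp, 0 < h α) {α : V} (hα : α ∈ Φ) (h0 : 0 ≤ h α) : α ∈ Φp := by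
  refine ((hp.2.1 α hα).1).resolve_right fun hneg => ?_
  have := hpos _ hneg
  rw [map_neg] at this
  linarith

theorem inner_eq_zero_of_add_notMem {Φ Φp : Set V} (hΦ : IsRootSystem Φ)
    (hp : IsPositiveSystem Φ Φp) {h : V →ₗ[ℝ] ℝ} (hpos : ∀ α ∈ Φp, 0 < h α) {δ ε : V}
    (hδ : δ ∈ Φp) (hε : ε ∈ Φp) (hlen : ⟪ε, ε⟫ = ⟪δ, δ⟫) (hh : h ε = h δ) (hne : ε ≠ δ)
    (hadd : ε + δ ∉ Φp) : ⟪δ, ε⟫ = 0 := by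
  have hδh := hpos δ hδ
  rcases lt_trichotomy ⟪δ, ε⟫ 0 with hneg | hzero | hpos'
  · have hne' : ε ≠ -δ := by
      rintro rfl
      have := hpos _ hε
      rw [map_neg] at this
      linarith
    refine absurd (hp.mem_of_nonneg hpos ?_ ?_) hadd
    · exact hΦ.add_mem_of_inner_neg (hp.1 hδ) (hp.1 hε) hlen hneg hne'
    · rw [map_add]; linarith
  · exact hzero
  · have hsub := hp.mem_of_nonneg hpos
      (hΦ.sub_mem_of_inner_pos (hp.1 hδ) (hp.1 hε) hlen hpos' hne) (by rw [map_sub, hh, sub_self])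
    have := hpos _ hsub
    rw [map_sub, hh, sub_self] at this
    exact (lt_irrefl 0 this).elim

section Folding

variable (σ : V ≃ₗᵢ[ℝ] V)

theorem inner_iterate_map_map (k : ℕ) (x y : V) : ⟪(⇑σ)^[k] x, (⇑σ)^[k] y⟫ = ⟪x, y⟫ := by
  induction k with
  | zero => rfl
  | succ k ih => rw [iterate_succ_apply', iterate_succ_apply', σ.inner_map_map, ih]

theorem map_sum_eq_of_mapsTo {B : Finset V} (hB : MapsTo σ B B) :
    σ (∑ γ ∈ B, γ) = ∑ γ ∈ B, γ := by
  rw [map_sum]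
  exact Finset.sum_nbij σ hB σ.injective.injOn
    ((B.finite_toSet.injOn_iff_bijOn_of_mapsTo hB).mp σ.injective.injOn).surjOn (fun _ _ => rfl)

theorem inner_iterate_right_of_apply_eq {ν : V} (hν : σ ν = ν) (k : ℕ) (x : V) :
    ⟪ν, (⇑σ)^[k] x⟫ = ⟪ν, x⟫ := by
  conv_lhs => rw [← iterate_fixed hν k]
  exact inner_iterate_map_map σ k ν x

theorem inner_eq_zero_of_inner_sum_eq_zero {B : Finset V}
    (hB : ∀ γ ∈ B, ∀ δ ∈ B, ∃ k : ℕ, (⇑σ)^[k] γ = δ) {ν : V} (hν : σ ν = ν)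
    (hsum : ⟪ν, ∑ γ ∈ B, γ⟫ = 0) {γ : V} (hγ : γ ∈ B) : ⟪ν, γ⟫ = 0 := by
  have hconst : ∀ δ ∈ B, ⟪ν, δ⟫ = ⟪ν, γ⟫ := fun δ hδ => by
    obtain ⟨k, rfl⟩ := hB γ hγ δ hδ
    exact inner_iterate_right_of_apply_eq σ hν k γ
  rw [inner_sum, Finset.sum_congr rfl hconst, Finset.sum_const, nsmul_eq_mul] at hsum
  exact (mul_eq_zero.mp hsum).resolve_left (Nat.cast_ne_zero.mpr (Finset.card_ne_zero_of_mem hγ))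

theorem isFoldedPosRoot_sum_orbitFinset [DecidableEq V] {S : Set V} (hS : MapsTo σ S S) {δ : V}
    (hδS : δ ∈ S) (hδ : δ ∈ periodicPts σ)
    (horth : ∀ i j, (⇑σ)^[i] δ ≠ (⇑σ)^[j] δ → ⟪(⇑σ)^[i] δ, (⇑σ)^[j] δ⟫ = 0) :
    IsFoldedPosRoot σ S (∑ γ ∈ orbitFinset σ δ, γ) := by
  have hmem (γ : V) := mem_orbitFinset (y := γ) hδ
  refine ⟨orbitFinset σ δ, fun γ hγ => ?_, ⟨δ, (hmem δ).mpr ⟨0, rfl⟩⟩, fun γ hγ => ?_,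
    fun γ hγ γ' hγ' => exists_iterate_eq_of_mem_orbitFinset hδ hγ hγ',
    fun γ hγ γ' hγ' hne => ?_, rfl⟩
  · obtain ⟨k, rfl⟩ := (hmem γ).mp hγ
    exact hS.iterate k hδS
  · obtain ⟨k, rfl⟩ := (hmem γ).mp hγ
    exact (hmem _).mpr ⟨k + 1, iterate_succ_apply' _ _ _⟩
  · obtain ⟨i, rfl⟩ := (hmem γ).mp hγ
    obtain ⟨j, rfl⟩ := (hmem γ').mp hγ'
    exact horth i j hne

theorem reflTransGen_fire_add_sum {S : Set V} {B : Finset V} (hBS : (B : Set V) ⊆ S)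
    (horth : (B : Set V).Pairwise fun γ δ => ⟪γ, δ⟫ = 0) {ν : V} (hν : ∀ γ ∈ B, ⟪ν, γ⟫ = 0) :
    ReflTransGen (fire S) ν (ν + ∑ γ ∈ B, γ) := by
  classical
  induction B using Finset.induction_on with
  | empty => simpa using .refl
  | insert a C ha ih =>
    rw [Finset.coe_insert] at hBS horth
    refine (ih (subset_insert a _ |>.trans hBS) (horth.mono (subset_insert a _))
      fun γ hγ => hν γ (Finset.mem_insert_of_mem hγ)).tail
        ⟨a, hBS (mem_insert a _), ?_, by rw [Finset.sum_insert ha]; abel⟩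
    rw [inner_coroot_eq_zero_iff, inner_add_left, sum_inner, hν a (Finset.mem_insert_self a C),
      zero_add]
    exact Finset.sum_eq_zero fun γ hγ =>
      horth (mem_insert_of_mem a hγ) (mem_insert a _) (ne_of_mem_of_not_mem hγ ha)

theorem reflTransGen_fire_of_fire_folded {Φp : Set V} {ν μ : V} (hν : σ ν = ν)
    (hfire : fire {β | IsFoldedPosRoot σ Φp β} ν μ) : ReflTransGen (fire Φp) ν μ ∧ σ μ = μ := by
  obtain ⟨_, ⟨B, hBS, -, hBσ, hBtrans, hBorth, rfl⟩, hνβ, rfl⟩ := hfire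
  have hνB (γ : V) (hγ : γ ∈ B) : ⟪ν, γ⟫ = 0 :=
    inner_eq_zero_of_inner_sum_eq_zero σ hBtrans hν ((inner_coroot_eq_zero_iff _ _).mp hνβ) hγ
  exact ⟨reflTransGen_fire_add_sum hBS hBorth hνB, by rw [map_add, hν, map_sum_eq_of_mapsTo σ hBσ]⟩

theorem reflTransGen_fire_of_reflTransGen_fire_folded {Φp : Set V} {lam μ : V}
    (hlam : σ lam = lam) (h : ReflTransGen (fire {β | IsFoldedPosRoot σ Φp β}) lam μ) :
    ReflTransGen (fire Φp) lam μ ∧ σ μ = μ := by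
  induction h with
  | refl => exact ⟨.refl, hlam⟩
  | tail _ hstep ih =>
    obtain ⟨hpath, hfixed⟩ := reflTransGen_fire_of_fire_folded σ ih.2 hstep
    exact ⟨ih.1.trans hpath, hfixed⟩

theorem exists_fire_folded_of_fire {Φ : Set V} {Φp : Finset V} (hΦ : IsRootSystem Φ)
    (hp : IsPositiveSystem Φ Φp) (hσp : ∀ α ∈ Φp, σ α ∈ Φp) {μ ν : V} (hμ : σ μ = μ)
    (hfire : fire Φp μ ν) : ∃ ν', fire {β | IsFoldedPosRoot σ Φp β} μ ν' := by
  classical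
  obtain ⟨α, hα, hμα, -⟩ := hfire
  have hmaps : MapsTo σ (Φp : Set V) Φp := fun x hx => hσp x hx
  obtain ⟨r, hr, hper⟩ := exists_pos_iterate_eq_self_of_mapsTo σ.injective hmaps
  obtain ⟨ℓ, hℓ⟩ := hp.2.2
  obtain ⟨h, hpos, hinv⟩ := exists_pos_linearMap_invariant ℓ hℓ (σ : V →ₗ[ℝ] V) hmaps hr hper
  set T := Φp.filter fun γ => ⟪μ, γ⟫ = 0
  obtain ⟨δ, hδT, hmax⟩ := T.exists_max_image h
    ⟨α, Finset.mem_filter.mpr ⟨hα, (inner_coroot_eq_zero_iff _ _).mp hμα⟩⟩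
  have hδ := (Finset.mem_filter.mp hδT).1
  have hμorb (k : ℕ) : ⟪μ, (⇑σ)^[k] δ⟫ = 0 :=
    (inner_iterate_right_of_apply_eq σ hμ k δ).trans (Finset.mem_filter.mp hδT).2
  have hh (k : ℕ) : h ((⇑σ)^[k] δ) = h δ := apply_iterate_eq_of_mapsTo hmaps hinv k hδ
  have hδper : δ ∈ periodicPts σ := mk_mem_periodicPts hr (hper δ hδ)
  refine ⟨_, _, isFoldedPosRoot_sum_orbitFinset σ hmaps hδ hδper fun i j hne => ?_, ?_, rfl⟩
  · -- every point of the orbit maximises `h` on `T`, so no sum of two of them lies in `T`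
    refine inner_eq_zero_of_add_notMem hΦ hp hpos (hmaps.iterate i hδ) (hmaps.iterate j hδ)
      (by rw [inner_iterate_map_map, inner_iterate_map_map]) (by rw [hh, hh]) hne.symm
      fun hadd => ?_
    have := hmax _ (Finset.mem_filter.mpr ⟨hadd, by rw [inner_add_right, hμorb, hμorb, add_zero]⟩)
    rw [map_add, hh, hh] at this
    linarith [hpos δ hδ]
  · rw [inner_coroot_eq_zero_iff, inner_sum]
    refine Finset.sum_eq_zero fun γ hγ => ?_
    obtain ⟨k, rfl⟩ := (mem_orbitFinset hδper).mp hγ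
    exact hμorb k

end Folding

theorem folding_confluence_general (Φ Φp : Finset V)
    (hΦ : IsRootSystem (Φ : Set V)) (hp : IsPositiveSystem (Φ : Set V) (Φp : Set V))
    (σ : V ≃ₗᵢ[ℝ] V)
    (hσp : ∀ α ∈ Φp, σ α ∈ Φp)
    (lam : V) (hσlam : σ lam = lam)
    (hconf : ConfluentFrom (Φp : Set V) lam) :
    ConfluentFrom {β | IsFoldedPosRoot σ (Φp : Set V) β} lam := by
  intro μ₁ μ₂ h₁ hstop₁ h₂ hstop₂
  obtain ⟨h₁', hμ₁⟩ := reflTransGen_fire_of_reflTransGen_fire_folded σ hσlam h₁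
  obtain ⟨h₂', hμ₂⟩ := reflTransGen_fire_of_reflTransGen_fire_folded σ hσlam h₂
  refine hconf μ₁ μ₂ h₁' ?_ h₂' ?_
  · rintro ⟨ν, hν⟩
    exact hstop₁ (exists_fire_folded_of_fire σ hΦ hp hσp hμ₁ hν)
  · rintro ⟨ν, hν⟩
    exact hstop₂ (exists_fire_folded_of_fire σ hΦ hp hσp hμ₂ hν)

/-- folding preserves confluence of central-firing.  If `σ` is a Dynkin diagram
automorphism of the simply laced `Φ` with no vertex adjacent to a vertex of its orbit, and
central-firing for `Φ` is confluent from the `σ`-invariant weight `λ`, then central-firing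
for the folded system `Φ'` is confluent from `λ`. -/
theorem folding_confluence (Φ Φp Δ : Finset V)
    (hΦ : IsRootSystem (Φ : Set V)) (hp : IsPositiveSystem (Φ : Set V) (Φp : Set V))
    (hΔ : IsSimpleSystem (Φp : Set V) Δ) (hsl : IsSimplyLaced (Φ : Set V))
    (σ : V ≃ₗᵢ[ℝ] V)
    (hσΦ : ∀ α ∈ Φ, σ α ∈ Φ) (hσp : ∀ α ∈ Φp, σ α ∈ Φp) (hσΔ : ∀ a ∈ Δ, σ a ∈ Δ)
    (hadj : ∀ a ∈ Δ, ∀ k : ℕ, (fun v => σ v)^[k] a ≠ a → ⟪a, (fun v => σ v)^[k] a⟫ = 0)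
    (lam : V) (hlam : lam ∈ weightLattice (Φ : Set V)) (hσlam : σ lam = lam)
    (hconf : ConfluentFrom (Φp : Set V) lam) :
    ConfluentFrom {β | IsFoldedPosRoot σ (Φp : Set V) β} lam :=
  folding_confluence_general Φ Φp hΦ hp σ hσp lam hσlam hconf

end CF
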